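/- Let H = {v ∈ ℝⁿ : v₁ + ⋯ + vₙ = 0} be the hyperplane of vectors summing to zero inside ℓ₁ⁿ (n ≥ 2). Then the relative projection constant λ(H, ℓ₁ⁿ) equals 2 − 2/n. -/

import Mathlib

/-!
The averaging projection `v ↦ v - (mean v) • 𝟙` has `ℓ₁`-norm at most `2 - 2/n`: writing
`n vᵢ - ∑ⱼ vⱼ = ∑ⱼ (vᵢ - vⱼ)` gives `|n vᵢ - ∑ⱼ vⱼ| ≤ (n - 2)|vᵢ| + ‖v‖₁`, and summing over `i`
gives `(2n - 2)‖v‖₁`.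

Conversely, let `P` be any projection onto `H`. Since `eⱼ - eₖ ∈ H`, the vector `u = eⱼ - P eⱼ`
does not depend on `j`, and `∑ uᵢ = 1`. Then `∑ⱼ ‖eⱼ - u‖₁ = (n - 1)‖u‖₁ + ∑ⱼ |1 - uⱼ|`, which is
at least `(n - 1) + (n - 1)`, so `n ‖P‖ ≥ 2n - 2`.
-/

open Finset Fintype

local notation "ℓ¹(" ι ")" => PiLp 1 (fun _ : ι => ℝ)

variable {ι : Type*} [Fintype ι]

theorem abs_card_mul_sub_sum_le (v : ι → ℝ) (i : ι) :
    |card ι * v i - ∑ j, v j| ≤ (card ι - 2) * |v i| + ∑ j, |v j| := by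
  classical
  have hdiff : ∑ j, |v i - v j| = ∑ j ∈ univ.erase i, |v i - v j| := by
    rw [← add_sum_erase _ _ (mem_univ i)]; simp
  have hbound : ∑ j, (|v i| + |v j|) = 2 * |v i| + ∑ j ∈ univ.erase i, (|v i| + |v j|) := by
    rw [← add_sum_erase _ _ (mem_univ i)]; ring
  calc |card ι * v i - ∑ j, v j| = |∑ j, (v i - v j)| := by
        rw [sum_sub_distrib, sum_const, card_univ, nsmul_eq_mul]
    _ ≤ ∑ j, |v i - v j| := abs_sum_le_sum_abs _ _
    _ ≤ ∑ j ∈ univ.erase i, (|v i| + |v j|) := hdiff ▸ sum_le_sum fun j _ => abs_sub _ _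
    _ = (card ι - 2) * |v i| + ∑ j, |v j| := by
        rw [← add_left_inj (2 * |v i|), add_comm, ← hbound, sum_add_distrib, sum_const,
          card_univ, nsmul_eq_mul]
        ring

theorem sum_abs_card_mul_sub_sum_le (v : ι → ℝ) :
    ∑ i, |card ι * v i - ∑ j, v j| ≤ (2 * card ι - 2) * ∑ j, |v j| :=
  calc ∑ i, |card ι * v i - ∑ j, v j| ≤ ∑ i, ((card ι - 2) * |v i| + ∑ j, |v j|) :=
        sum_le_sum fun i _ => abs_card_mul_sub_sum_le v i
    _ = (2 * card ι - 2) * ∑ j, |v j| := by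
        rw [sum_add_distrib, ← mul_sum, sum_const, card_univ, nsmul_eq_mul]; ring

theorem sum_abs_single_sub_eq [DecidableEq ι] (u : ι → ℝ) (j : ι) :
    ∑ i, |(Pi.single j 1 : ι → ℝ) i - u i| = ∑ i, |u i| + (|1 - u j| - |u j|) := by
  have hoff : ∑ i ∈ univ.erase j, |(Pi.single j 1 : ι → ℝ) i - u i| = ∑ i ∈ univ.erase j, |u i| :=
    sum_congr rfl fun i hi => by simp [Pi.single_eq_of_ne (ne_of_mem_erase hi)]
  rw [← add_sum_erase _ _ (mem_univ j), ← add_sum_erase _ _ (mem_univ j), hoff,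
    Pi.single_eq_same]
  ring

theorem two_mul_card_sub_two_le_sum_sum_abs_single_sub [DecidableEq ι] {u : ι → ℝ}
    (hu : ∑ i, u i = 1) : 2 * card ι - 2 ≤ ∑ j, ∑ i, |(Pi.single j 1 : ι → ℝ) i - u i| := by
  have hcard : (1 : ℝ) ≤ card ι := by
    have := (nonempty_of_sum_ne_zero (hu ▸ one_ne_zero : ∑ i, u i ≠ 0)).card_pos
    exact_mod_cast this
  have hnorm : 1 ≤ ∑ i, |u i| := hu ▸ abs_sum_le_sum_abs u univ |>.trans' (by simp)
  have hcompl : card ι - 1 ≤ ∑ j, |1 - u j| :=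
    calc card ι - 1 = ∑ j, (1 - u j) := by simp [sum_sub_distrib, hu]
      _ ≤ ∑ j, |1 - u j| := sum_le_sum fun j _ => le_abs_self _
  simp only [sum_abs_single_sub_eq, sum_add_distrib, sum_sub_distrib, sum_const, card_univ,
    nsmul_eq_mul]
  nlinarith [mul_nonneg (sub_nonneg.2 hcard) (sub_nonneg.2 hnorm)]

variable (ι) in
noncomputable def meanZeroProjection : ℓ¹(ι) →L[ℝ] ℓ¹(ι) :=
  LinearMap.toContinuousLinearMap
    { toFun v := WithLp.toLp 1 fun i => v i - (∑ j, v j) / card ι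
      map_add' x y := by ext i; simp only [PiLp.add_apply, sum_add_distrib]; ring
      map_smul' c x := by
        ext i; simp only [PiLp.smul_apply, smul_eq_mul, RingHom.id_apply, ← mul_sum]; ring }

theorem meanZeroProjection_apply (v : ℓ¹(ι)) (i : ι) :
    meanZeroProjection ι v i = v i - (∑ j, v j) / card ι :=
  rfl

theorem sum_meanZeroProjection_apply [Nonempty ι] (v : ℓ¹(ι)) :
    ∑ i, meanZeroProjection ι v i = 0 := by
  simp only [meanZeroProjection_apply, sum_sub_distrib, sum_const, card_univ, nsmul_eq_mul]
  field_simp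
  ring

theorem meanZeroProjection_apply_of_sum_eq_zero {v : ℓ¹(ι)} (hv : ∑ i, v i = 0) :
    meanZeroProjection ι v = v := by
  ext i
  simp [meanZeroProjection_apply, hv]

theorem norm_meanZeroProjection_le [Nonempty ι] :
    ‖meanZeroProjection ι‖ ≤ 2 - 2 / card ι := by
  have hcard : (1 : ℝ) ≤ card ι := by exact_mod_cast Fintype.card_pos
  refine ContinuousLinearMap.opNorm_le_bound _ ?_ fun v => ?_
  · have : 2 / (card ι : ℝ) ≤ 2 := div_le_self zero_le_two hcard
    linarith
  calc ‖meanZeroProjection ι v‖ = (∑ i, |card ι * v i - ∑ j, v j|) / card ι := by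
        simp only [PiLp.norm_eq_of_L1, Real.norm_eq_abs, sum_div]
        refine sum_congr rfl fun i _ => ?_
        have hmean : v i - (∑ j, v j) / card ι = (card ι * v i - ∑ j, v j) / card ι := by
          field_simp
        rw [meanZeroProjection_apply, hmean, abs_div, Nat.abs_cast]
    _ ≤ (2 * card ι - 2) * (∑ j, |v j|) / card ι := by
        gcongr
        exact sum_abs_card_mul_sub_sum_le _
    _ = (2 - 2 / card ι) * ‖v‖ := by
        simp only [PiLp.norm_eq_of_L1, Real.norm_eq_abs]
        field_simp

section Projection

variable [DecidableEq ι] {P : ℓ¹(ι) →L[ℝ] ℓ¹(ι)}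

theorem exists_apply_single_eq_single_sub [Nonempty ι] (hrange : ∀ v, ∑ i, P v i = 0)
    (hfix : ∀ v : ℓ¹(ι), ∑ i, v i = 0 → P v = v) :
    ∃ u : ℓ¹(ι), ∑ i, u i = 1 ∧ ∀ j, P (PiLp.single 1 j 1) = PiLp.single 1 j 1 - u := by
  obtain ⟨j₀⟩ := ‹Nonempty ι›
  refine ⟨PiLp.single 1 j₀ 1 - P (PiLp.single 1 j₀ 1), ?_, fun j => ?_⟩
  · simp [sum_sub_distrib, hrange]
  · have hdiff := hfix (PiLp.single 1 j 1 - PiLp.single 1 j₀ 1) (by simp [sum_sub_distrib])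
    rw [map_sub] at hdiff
    rw [← sub_add_cancel (P (PiLp.single 1 j 1)) (P (PiLp.single 1 j₀ 1)), hdiff]
    abel

theorem two_sub_two_div_card_le_norm [Nonempty ι] (hrange : ∀ v, ∑ i, P v i = 0)
    (hfix : ∀ v : ℓ¹(ι), ∑ i, v i = 0 → P v = v) :
    2 - 2 / card ι ≤ ‖P‖ := by
  obtain ⟨u, hu, hPsingle⟩ := exists_apply_single_eq_single_sub hrange hfix
  have hcard : (0 : ℝ) < card ι := by exact_mod_cast Fintype.card_pos
  have hsum : 2 * card ι - 2 ≤ card ι * ‖P‖ :=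
    calc 2 * card ι - 2 ≤ ∑ j, ∑ i, |(Pi.single j 1 : ι → ℝ) i - u i| :=
          two_mul_card_sub_two_le_sum_sum_abs_single_sub hu
      _ = ∑ j, ‖P (PiLp.single 1 j 1)‖ := by
          simp [hPsingle, PiLp.norm_eq_of_L1, Pi.single_apply]
      _ ≤ ∑ _j : ι, ‖P‖ := sum_le_sum fun j _ =>
          (P.le_opNorm _).trans_eq (by rw [PiLp.norm_single, norm_one, mul_one])
      _ = card ι * ‖P‖ := by simp
  rw [sub_le_comm, le_div_iff₀ hcard]
  linarith

end Projection

theorem projection_constant_hyperplane_l1 (n : ℕ) (hn : 2 ≤ n) :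
    sInf {c : ℝ | ∃ P : PiLp 1 (fun _ : Fin n => ℝ) →L[ℝ] PiLp 1 (fun _ : Fin n => ℝ),
        (∀ v, ∑ i, P v i = 0) ∧
        (∀ v : PiLp 1 (fun _ : Fin n => ℝ), (∑ i, v i = 0) → P v = v) ∧
        c = ‖P‖} = 2 - 2 / (n : ℝ) := by
  have : NeZero n := ⟨by omega⟩
  have hfix : ∀ v : ℓ¹(Fin n), ∑ i, v i = 0 → meanZeroProjection (Fin n) v = v :=
    fun _ => meanZeroProjection_apply_of_sum_eq_zero
  have hnorm : ‖meanZeroProjection (Fin n)‖ = 2 - 2 / (n : ℝ) := by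
    simpa using le_antisymm norm_meanZeroProjection_le
      (two_sub_two_div_card_le_norm sum_meanZeroProjection_apply hfix)
  refine IsLeast.csInf_eq ⟨⟨_, sum_meanZeroProjection_apply, hfix, hnorm.symm⟩, ?_⟩
  rintro _ ⟨P, hPrange, hPfix, rfl⟩
  simpa using two_sub_two_div_card_le_norm hPrange hPfix
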